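/- arXiv:1111.1027 — 4 statements merged into one kernel-verified Lean document; each statement's English description precedes it below -/
import Mathlib

section
/- (Moment generating function of the semicircle law as a Bessel-type series.) For every λ ∈ ℝ: (1/(2π)) · ∫_{−2}^{2} e^{λt} · √(4 − t²) dt = Σ_{n=0}^∞ λ^{2n} / ((n+1)! · n!). -/
/-!
Expanding `exp (l * t)` in its power series and integrating term by term (dominated convergence)
reduces the claim to the moments of the semicircle density. The substitution `t = 2 sin θ`
turns these into Wallis integrals over `[-π/2, π/2]`: the odd moments vanish and the `2n`-th
moment is `2π (2n)! / (n! (n+1)!)`, i.e. `2π` times the `n`-th Catalan number.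
-/

open Real intervalIntegral

lemma integral_sin_pow_add_two_neg_pi_div_two (n : ℕ) :
    ∫ x in -(π / 2)..π / 2, sin x ^ (n + 2) =
      (n + 1) / (n + 2) * ∫ x in -(π / 2)..π / 2, sin x ^ n := by
  simp [integral_sin_pow]

lemma integral_sin_pow_odd_neg_pi_div_two (n : ℕ) :
    ∫ x in -(π / 2)..π / 2, sin x ^ (2 * n + 1) = 0 := by
  induction n with
  | zero => simp
  | succ k ih => rw [show 2 * (k + 1) + 1 = 2 * k + 1 + 2 by ring,
      integral_sin_pow_add_two_neg_pi_div_two, ih, mul_zero]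

lemma integral_sin_pow_even_neg_pi_div_two (n : ℕ) :
    ∫ x in -(π / 2)..π / 2, sin x ^ (2 * n) =
      π * (2 * n).factorial / (4 ^ n * (n.factorial : ℝ) ^ 2) := by
  induction n with
  | zero => simp
  | succ k ih =>
    rw [show 2 * (k + 1) = 2 * k + 2 by ring, integral_sin_pow_add_two_neg_pi_div_two, ih,
      Nat.factorial_succ (2 * k + 1), Nat.factorial_succ (2 * k), Nat.factorial_succ k]
    push_cast
    field_simp
    ring

lemma integral_sin_pow_mul_cos_sq_neg_pi_div_two (n : ℕ) :
    ∫ x in -(π / 2)..π / 2, sin x ^ n * cos x ^ 2 =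
      (∫ x in -(π / 2)..π / 2, sin x ^ n) / (n + 2) := by
  have hsplit : ∫ x in -(π / 2)..π / 2, sin x ^ n * cos x ^ 2 =
      (∫ x in -(π / 2)..π / 2, sin x ^ n) - ∫ x in -(π / 2)..π / 2, sin x ^ (n + 2) := by
    rw [← integral_sub (by apply Continuous.intervalIntegrable; fun_prop)
      (by apply Continuous.intervalIntegrable; fun_prop)]
    congr 1 with x
    rw [cos_sq']
    ring
  rw [hsplit, integral_sin_pow_add_two_neg_pi_div_two]
  field_simp
  ring

lemma integral_pow_mul_sqrt_four_sub_sq (n : ℕ) :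
    ∫ t in (-2 : ℝ)..2, t ^ n * √(4 - t ^ 2) =
      2 ^ (n + 2) * ∫ x in -(π / 2)..π / 2, sin x ^ n * cos x ^ 2 := by
  have hsubst := integral_comp_mul_deriv (a := -(π / 2)) (b := π / 2)
    (f := fun x => 2 * sin x) (g := fun t => t ^ n * √(4 - t ^ 2))
    (fun x _ => (hasDerivAt_sin x).const_mul 2) (by fun_prop) (by fun_prop)
  simp only [Function.comp_def, sin_neg, sin_pi_div_two, mul_one, mul_neg] at hsubst
  rw [← hsubst, ← integral_const_mul]
  refine integral_congr fun x hx => ?_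
  rw [Set.uIcc_of_le (by linarith [pi_pos])] at hx
  have hsqrt : √(4 - (2 * sin x) ^ 2) = 2 * cos x := by
    rw [show 4 - (2 * sin x) ^ 2 = (2 * cos x) ^ 2 by
        linear_combination (-4) * sin_sq_add_cos_sq x, sqrt_sq (mul_nonneg zero_le_two (cos_nonneg_of_mem_Icc hx))]
  simp only [hsqrt]
  ring

lemma semicircle_moment_odd {n : ℕ} (hn : Odd n) :
    ∫ t in (-2 : ℝ)..2, t ^ n * √(4 - t ^ 2) = 0 := by
  obtain ⟨k, rfl⟩ := hn
  rw [integral_pow_mul_sqrt_four_sub_sq, integral_sin_pow_mul_cos_sq_neg_pi_div_two,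
    integral_sin_pow_odd_neg_pi_div_two]
  simp

lemma semicircle_moment_even (n : ℕ) :
    ∫ t in (-2 : ℝ)..2, t ^ (2 * n) * √(4 - t ^ 2) =
      2 * π * (2 * n).factorial / (n.factorial * (n + 1).factorial) := by
  rw [integral_pow_mul_sqrt_four_sub_sq, integral_sin_pow_mul_cos_sq_neg_pi_div_two,
    integral_sin_pow_even_neg_pi_div_two, Nat.factorial_succ, pow_add, pow_mul]
  push_cast
  field_simp
  ring

lemma hasSum_intervalIntegral_exp_mul_mul {a b : ℝ} {g : ℝ → ℝ} (hg : Continuous g) (l : ℝ) :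
    HasSum (fun k : ℕ => l ^ k / k.factorial * ∫ t in a..b, t ^ k * g t)
      (∫ t in a..b, exp (l * t) * g t) := by
  have hexp (x : ℝ) : HasSum (fun k : ℕ => x ^ k / k.factorial) (exp x) :=
    exp_eq_exp_ℝ ▸ NormedSpace.expSeries_div_hasSum_exp x
  simp only [← integral_const_mul]
  refine hasSum_integral_of_dominated_convergence (fun k t => |l * t| ^ k / k.factorial * |g t|)
    (fun k => by fun_prop) (fun k => Filter.Eventually.of_forall fun t _ => le_of_eq ?_)
    (Filter.Eventually.of_forall fun t _ => (hexp |l * t|).summable.mul_right _) ?_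
    (Filter.Eventually.of_forall fun t _ => ?_)
  · simp only [norm_mul, norm_div, norm_pow, Real.norm_eq_abs, Nat.abs_cast, abs_mul, mul_pow]
    ring
  · simp only [fun t => ((hexp |l * t|).mul_right |g t|).tsum_eq]
    apply Continuous.intervalIntegrable
    fun_prop
  · exact ((hexp (l * t)).mul_right (g t)).congr_fun fun k => by ring

/-- **Moment generating function of the semicircle law as a Bessel-type series.** -/
theorem semicircle_mgf_series (l : ℝ) :
    (1 / (2 * π)) * ∫ t in (-2 : ℝ)..2, Real.exp (l * t) * Real.sqrt (4 - t ^ 2) =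
      ∑' n : ℕ, l ^ (2 * n) / ((Nat.factorial (n + 1) : ℝ) * (Nat.factorial n : ℝ)) := by
  have hseries := hasSum_intervalIntegral_exp_mul_mul (a := -2) (b := 2)
    (g := fun t => √(4 - t ^ 2)) (by fun_prop) l
  have hodd (k : ℕ) (hk : k ∉ Set.range (2 * ·)) :
      l ^ k / k.factorial * ∫ t in (-2 : ℝ)..2, t ^ k * √(4 - t ^ 2) = 0 := by
    have hk_odd : Odd k := Nat.not_even_iff_odd.mp fun ⟨r, hr⟩ => hk ⟨r, (two_mul r).trans hr.symm⟩
    rw [semicircle_moment_odd hk_odd, mul_zero]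
  have hcoeff : HasSum (fun n : ℕ => 2 * π * (l ^ (2 * n) / ((n + 1).factorial * n.factorial)))
      (∫ t in (-2 : ℝ)..2, exp (l * t) * √(4 - t ^ 2)) :=
    (((mul_right_injective₀ (two_ne_zero' ℕ)).hasSum_iff hodd).mpr hseries).congr_fun fun n => by
      simp only [Function.comp_apply, semicircle_moment_even]
      field_simp
  rw [← hcoeff.tsum_eq, tsum_mul_left]
  field_simp
end

section
/- (Estimate for the logarithmic moment generating function of a Gaussian–semicircular mixture.) Let θ ∈ (0,1) and define, for λ ∈ ℝ, Λ_θ(λ) := log( (1−θ)·e^{λ²/2} + θ·(1/(2π))·∫_{−2}^{2} e^{λt}·√(4 − t²) dt ). Then for every λ ≥ 0: | Λ_θ(λ) − λ²/2 − log(1−θ) | ≤ (θ/(1−θ)) · e^{2λ − λ²/2}. In particular, lim_{λ→∞} ( Λ_θ(λ) − λ²/2 ) = log(1−θ). -/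
open Real Filter

/-!
With `A = (1 - θ) e^{λ²/2}` the Gaussian part and `B = θ S(λ)` the semicircular part of the
moment generating function, `Λ_θ(λ) - λ²/2 - log (1 - θ) = log (A + B) - log A`, which lies in
`[0, B / A]` because `log x ≤ x - 1`. The semicircle law is supported on `[-2, 2]`, so
`0 ≤ S(λ) ≤ e^{2λ}` for `λ ≥ 0`, and `B / A ≤ θ / (1 - θ) · e^{2λ - λ²/2}`, which tends to `0`.
-/

/-- The logarithmic moment generating function of the mixture
`(1−θ)·(standard Gaussian) + θ·(semicircle law of radius 2)`. -/
noncomputable def mixtureLogMGF (θ l : ℝ) : ℝ :=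
  Real.log ((1 - θ) * Real.exp (l ^ 2 / 2) +
    θ * ((1 / (2 * π)) * ∫ t in (-2 : ℝ)..2, Real.exp (l * t) * Real.sqrt (4 - t ^ 2)))

theorem integral_sqrt_sq_sub_sq {r : ℝ} (hr : 0 ≤ r) :
    ∫ t in -r..r, √(r ^ 2 - t ^ 2) = π * r ^ 2 / 2 := by
  have hscale : ∀ u : ℝ, √(r ^ 2 - (r * u) ^ 2) = r * √(1 - u ^ 2) := fun u => by
    rw [show r ^ 2 - (r * u) ^ 2 = r ^ 2 * (1 - u ^ 2) by ring, sqrt_mul (sq_nonneg r),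
      sqrt_sq hr]
  rcases hr.eq_or_lt with rfl | hr
  · simp
  have hsub := intervalIntegral.integral_comp_mul_left (fun t => √(r ^ 2 - t ^ 2)) hr.ne'
    (a := -1) (b := 1)
  simp only [hscale, intervalIntegral.integral_const_mul, integral_sqrt_one_sub_sq, mul_neg,
    mul_one, smul_eq_mul] at hsub
  field_simp at hsub ⊢
  linarith

theorem integral_exp_mul_mul_sqrt_sq_sub_sq_le (l : ℝ) {r : ℝ} (hr : 0 ≤ r) :
    ∫ t in -r..r, exp (l * t) * √(r ^ 2 - t ^ 2) ≤ exp (r * |l|) * (π * r ^ 2 / 2) := by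
  rw [← integral_sqrt_sq_sub_sq hr, ← intervalIntegral.integral_const_mul]
  refine intervalIntegral.integral_mono_on (by linarith)
    (Continuous.intervalIntegrable (by fun_prop) _ _)
    (Continuous.intervalIntegrable (by fun_prop) _ _)
    fun t ht => mul_le_mul_of_nonneg_right (exp_le_exp.2 ?_) (sqrt_nonneg _)
  calc l * t ≤ |l| * |t| := (le_abs_self _).trans (abs_mul l t).le
    _ ≤ |l| * r := by gcongr; exact abs_le.2 ht
    _ = r * |l| := mul_comm _ _

theorem abs_log_add_sub_log_le {a b : ℝ} (ha : 0 < a) (hb : 0 ≤ b) :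
    |log (a + b) - log a| ≤ b / a := by
  have hab : 0 < a + b := by linarith
  rw [abs_of_nonneg (sub_nonneg.2 (log_le_log ha (by linarith))), ← log_div hab.ne' ha.ne']
  calc log ((a + b) / a) ≤ (a + b) / a - 1 := log_le_sub_one_of_pos (by positivity)
    _ = b / a := by field_simp; ring

theorem tendsto_exp_mul_sub_sq_div_two_atTop (c : ℝ) :
    Tendsto (fun l : ℝ => exp (c * l - l ^ 2 / 2)) atTop (nhds 0) := by
  refine tendsto_exp_atBot.comp ?_
  have : Tendsto (fun l : ℝ => l * (l - 2 * c)) atTop atTop :=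
    tendsto_id.atTop_mul_atTop₀ (tendsto_atTop_add_const_right _ _ tendsto_id)
  convert (tendsto_neg_atBot_iff.2 this).atBot_div_const two_pos using 2 with l
  ring

theorem abs_mixtureLogMGF_sub_le {θ l : ℝ} (hθ₀ : 0 ≤ θ) (hθ₁ : θ < 1) (hl : 0 ≤ l) :
    |mixtureLogMGF θ l - l ^ 2 / 2 - log (1 - θ)| ≤
      θ / (1 - θ) * exp (2 * l - l ^ 2 / 2) := by
  set S := (1 / (2 * π)) * ∫ t in (-2 : ℝ)..2, exp (l * t) * √(4 - t ^ 2)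
  have hS₀ : 0 ≤ S := mul_nonneg (by positivity) <| intervalIntegral.integral_nonneg
    (by norm_num) fun t _ => by positivity
  have hS₁ : S ≤ exp (2 * l) := by
    have hint := integral_exp_mul_mul_sqrt_sq_sub_sq_le l zero_le_two
    norm_num [abs_of_nonneg hl] at hint
    calc S ≤ 1 / (2 * π) * (exp (2 * l) * (π * 4 / 2)) :=
        mul_le_mul_of_nonneg_left hint (by positivity)
      _ = exp (2 * l) := by field_simp; ring
  have hA : 0 < (1 - θ) * exp (l ^ 2 / 2) := mul_pos (by linarith) (exp_pos _)
  have hlog : mixtureLogMGF θ l - l ^ 2 / 2 - log (1 - θ) =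
      log ((1 - θ) * exp (l ^ 2 / 2) + θ * S) - log ((1 - θ) * exp (l ^ 2 / 2)) := by
    rw [mixtureLogMGF, log_mul (by linarith) (exp_pos _).ne', log_exp]
    ring
  calc _ ≤ θ * S / ((1 - θ) * exp (l ^ 2 / 2)) :=
        hlog ▸ abs_log_add_sub_log_le hA (by positivity)
    _ ≤ θ * exp (2 * l) / ((1 - θ) * exp (l ^ 2 / 2)) := by gcongr
    _ = θ / (1 - θ) * exp (2 * l - l ^ 2 / 2) := by rw [exp_sub]; field_simp

/-- **Estimate for the logarithmic moment generating function of a Gaussian–semicircular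
mixture.** -/
theorem mixture_logMGF_estimate (θ : ℝ) (hθ : θ ∈ Set.Ioo (0 : ℝ) 1) :
    (∀ l : ℝ, 0 ≤ l →
      |mixtureLogMGF θ l - l ^ 2 / 2 - Real.log (1 - θ)| ≤
        θ / (1 - θ) * Real.exp (2 * l - l ^ 2 / 2)) ∧
    Tendsto (fun l : ℝ => mixtureLogMGF θ l - l ^ 2 / 2) atTop (nhds (Real.log (1 - θ))) := by
  have estimate := fun l => abs_mixtureLogMGF_sub_le (l := l) hθ.1.le hθ.2
  refine ⟨estimate, tendsto_iff_norm_sub_tendsto_zero.2 ?_⟩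
  refine squeeze_zero' (.of_forall fun _ => norm_nonneg _) (eventually_atTop.2 ⟨0, estimate⟩) ?_
  simpa using (tendsto_exp_mul_sub_sq_div_two_atTop 2).const_mul (θ / (1 - θ))
end

section
/- (Optimality of the order p in the Rosenthal inequality via random selectors, explicit form.) Fix a real number C ≥ 1 and set a := (7/8)³/(32C)⁴. Let p be a positive integer with 2^{−p} < a, set k := a·p, and let δ_1, …, δ_p be independent {0,1}-valued random variables with P(δ_i = 1) = a. If F ∈ ℝ satisfies ( E[ |(1/k)·Σ_{i=1}^p δ_i − 1|^p ] )^{1/p} ≤ C·√(p/k) + F/k, then F ≥ ( (7/8)^{3/2} / 1024 ) · (p/C). -/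
/-!
The `p`-th moment is bounded below by the contribution of the event that `⌈p / 4⌉` given
selectors all equal `1`. This event has probability `a ^ ⌈p / 4⌉`, whose `p`-th root is at least
`a ^ (1 / 4) / 2` because `2⁻¹ ^ p < a`, and on it the normalized sum is at least `1 / (4a)`.
Hence the `L^p` norm is at least `(1 / (4a) - 1) a ^ (1 / 4) / 2 ≈ a ^ (-3 / 4) / 8`, while
`C √(p / k) = C a ^ (-1 / 2)`. Writing `a = t ^ 4` with `t = (7/8) ^ (3/4) / (32 C)`, the gap
between the two, multiplied by `k`, is at least `(7/8) ^ (3/2) p / (1024 C)`.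
-/

open MeasureTheory ProbabilityTheory Real

section Selectors

variable {Ω ι : Type*} [MeasurableSpace Ω] {μ : Measure Ω} {δ : ι → Ω → ℝ} {a : ℝ}

theorem measureReal_biInter_eq_one_eq_pow (hindep : iIndepFun δ μ)
    (hbern : ∀ i, μ {ω | δ i ω = 1} = ENNReal.ofReal a) (ha : 0 ≤ a) (S : Finset ι) :
    μ.real (⋂ i ∈ S, {ω | δ i ω = 1}) = a ^ S.card := by
  rw [measureReal_def, hindep.meas_biInter (s := fun i => {ω | δ i ω = 1})
      fun i _ => ⟨{1}, measurableSet_singleton 1, rfl⟩,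
    Finset.prod_congr rfl fun i _ => hbern i, Finset.prod_const, ENNReal.toReal_pow,
    ENNReal.toReal_ofReal ha]

variable [Fintype ι]

theorem integrable_abs_inv_mul_sum_sub_one_pow [IsFiniteMeasure μ]
    (hmeas : ∀ i, Measurable (δ i)) (h01 : ∀ i ω, δ i ω = 0 ∨ δ i ω = 1) (k : ℝ) (n : ℕ) :
    Integrable (fun ω => |k⁻¹ * ∑ i, δ i ω - 1| ^ n) μ := by
  refine .of_bound (by fun_prop) ((|k⁻¹| * Fintype.card ι + 1) ^ n) (.of_forall fun ω => ?_)
  have hδ : ∀ i, |δ i ω| ≤ 1 := fun i => by rcases h01 i ω with h | h <;> simp [h]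
  have hsum : |∑ i, δ i ω| ≤ Fintype.card ι := by
    refine (Finset.abs_sum_le_sum_abs _ _).trans ((Finset.sum_le_sum fun i _ => hδ i).trans_eq ?_)
    simp
  rw [norm_pow, Real.norm_eq_abs, abs_abs]
  gcongr
  calc |k⁻¹ * ∑ i, δ i ω - 1| ≤ |k⁻¹ * ∑ i, δ i ω| + |1| := abs_sub _ _
    _ ≤ |k⁻¹| * Fintype.card ι + 1 := by rw [abs_mul, abs_one]; gcongr

theorem card_div_sub_one_pow_mul_pow_le_integral [IsFiniteMeasure μ]
    (hmeas : ∀ i, Measurable (δ i)) (h01 : ∀ i ω, δ i ω = 0 ∨ δ i ω = 1)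
    (hindep : iIndepFun δ μ) (hbern : ∀ i, μ {ω | δ i ω = 1} = ENNReal.ofReal a) (ha : 0 ≤ a)
    {k : ℝ} (hk : 0 < k) (S : Finset ι) (hkS : k ≤ S.card) (n : ℕ) :
    ((S.card : ℝ) / k - 1) ^ n * a ^ S.card ≤ ∫ ω, |k⁻¹ * ∑ i, δ i ω - 1| ^ n ∂μ := by
  set c : ℝ := (S.card : ℝ) / k - 1
  have hc : 0 ≤ c := by rw [sub_nonneg, le_div_iff₀ hk]; simpa using hkS
  have hsub : (⋂ i ∈ S, {ω | δ i ω = 1}) ⊆ {ω | c ^ n ≤ |k⁻¹ * ∑ i, δ i ω - 1| ^ n} := by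
    intro ω hω
    have hS : ∀ i ∈ S, δ i ω = 1 := by simpa using hω
    have hsum : (S.card : ℝ) ≤ ∑ i, δ i ω := calc
      (S.card : ℝ) = ∑ i ∈ S, δ i ω := by simp [Finset.sum_congr rfl hS]
      _ ≤ ∑ i, δ i ω := Finset.sum_le_univ_sum_of_nonneg fun i => by
        rcases h01 i ω with h | h <;> simp [h]
    have hcle : c ≤ k⁻¹ * ∑ i, δ i ω - 1 := by
      simp only [c, div_eq_inv_mul]; gcongr
    exact pow_le_pow_left₀ hc (hcle.trans (le_abs_self _)) n
  calc c ^ n * a ^ S.card = c ^ n * μ.real (⋂ i ∈ S, {ω | δ i ω = 1}) := by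
        rw [measureReal_biInter_eq_one_eq_pow hindep hbern ha]
    _ ≤ c ^ n * μ.real {ω | c ^ n ≤ |k⁻¹ * ∑ i, δ i ω - 1| ^ n} := by
        gcongr; exact measure_ne_top μ _
    _ ≤ _ := mul_meas_ge_le_integral_of_nonneg (.of_forall fun ω => by positivity)
        (integrable_abs_inv_mul_sum_sub_one_pow hmeas h01 k n) _

end Selectors

theorem pow_mul_pow_rpow_one_div {c a : ℝ} (hc : 0 ≤ c) (ha : 0 ≤ a) {p : ℕ} (hp : p ≠ 0)
    (m : ℕ) : (c ^ p * a ^ m) ^ (1 / (p : ℝ)) = c * a ^ ((m : ℝ) / p) := by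
  rw [mul_rpow (by positivity) (by positivity), one_div, pow_rpow_inv_natCast hc hp,
    ← rpow_natCast a m, ← rpow_mul ha, div_eq_mul_inv]

theorem rpow_one_fourth_div_two_le_rpow {a : ℝ} (ha : a ≤ 1) {p m : ℕ} (hp : 0 < p)
    (hpa : ((2 : ℝ) ^ p)⁻¹ ≤ a) (hm : 4 * m ≤ p + 4) :
    a ^ (1 / 4 : ℝ) / 2 ≤ a ^ ((m : ℝ) / p) := by
  have hp' : (0 : ℝ) < p := by exact_mod_cast hp
  have ha0 : 0 < a := lt_of_lt_of_le (by positivity) hpa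
  have hhalf : 1 / 2 ≤ a ^ (1 / (p : ℝ)) := by
    rw [one_div (p : ℝ), le_rpow_inv_iff_of_pos (by norm_num) ha0.le hp', rpow_natCast,
      one_div, inv_pow]
    exact hpa
  have hexp : (m : ℝ) / p ≤ 1 / 4 + 1 / p := by
    have : (4 * m : ℝ) ≤ p + 4 := by exact_mod_cast hm
    rw [div_le_iff₀ hp']
    field_simp
    linarith
  calc a ^ (1 / 4 : ℝ) / 2 ≤ a ^ (1 / 4 : ℝ) * a ^ (1 / (p : ℝ)) := by
        rw [div_eq_mul_one_div]; gcongr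
    _ = a ^ (1 / 4 + 1 / (p : ℝ)) := (rpow_add ha0 _ _).symm
    _ ≤ a ^ ((m : ℝ) / p) := rpow_le_rpow_of_exponent_ge ha0 ha hexp

theorem selectors_moment_lower_bound {Ω : Type*} [MeasurableSpace Ω] {μ : Measure Ω}
    [IsFiniteMeasure μ] {p : ℕ} (hp : 0 < p) {δ : Fin p → Ω → ℝ}
    (hmeas : ∀ i, Measurable (δ i)) (h01 : ∀ i ω, δ i ω = 0 ∨ δ i ω = 1)
    (hindep : iIndepFun δ μ) {a : ℝ} (hbern : ∀ i, μ {ω | δ i ω = 1} = ENNReal.ofReal a)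
    (ha : a ≤ 1 / 4) (hpa : ((2 : ℝ) ^ p)⁻¹ ≤ a) :
    (1 / (4 * a) - 1) * (a ^ (1 / 4 : ℝ) / 2) ≤
      (∫ ω, |(a * p)⁻¹ * ∑ i, δ i ω - 1| ^ (p : ℝ) ∂μ) ^ (1 / (p : ℝ)) := by
  have hp' : (0 : ℝ) < p := by exact_mod_cast hp
  have ha0 : 0 < a := lt_of_lt_of_le (by positivity) hpa
  obtain ⟨S, -, hS⟩ := Finset.exists_subset_card_eq (s := (Finset.univ : Finset (Fin p)))
    (n := (p + 3) / 4) (by simp; omega)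
  have hpS : (p : ℝ) ≤ 4 * S.card := by
    rw [hS]; exact_mod_cast (by omega : p ≤ 4 * ((p + 3) / 4))
  have hc0 : 0 ≤ 1 / (4 * a) - 1 := by
    rw [sub_nonneg, le_div_iff₀ (by positivity)]; linarith
  have hc : 1 / (4 * a) - 1 ≤ (S.card : ℝ) / (a * p) - 1 := by
    rw [sub_le_sub_iff_right, div_le_div_iff₀ (by positivity) (by positivity)]; nlinarith
  have hmoment := card_div_sub_one_pow_mul_pow_le_integral hmeas h01 hindep hbern ha0.le
    (k := a * p) (by positivity) S (by nlinarith) p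
  calc (1 / (4 * a) - 1) * (a ^ (1 / 4 : ℝ) / 2)
      ≤ ((S.card : ℝ) / (a * p) - 1) * a ^ ((S.card : ℝ) / p) :=
        mul_le_mul hc (rpow_one_fourth_div_two_le_rpow (by linarith) hp hpa (by omega))
          (by positivity) (hc0.trans hc)
    _ = (((S.card : ℝ) / (a * p) - 1) ^ p * a ^ S.card) ^ (1 / (p : ℝ)) :=
        (pow_mul_pow_rpow_one_div (hc0.trans hc) ha0.le hp.ne' _).symm
    _ ≤ _ := by
        gcongr
        · exact mul_nonneg (pow_nonneg (hc0.trans hc) p) (by positivity)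
        · simpa only [rpow_natCast] using hmoment

theorem mul_sub_le_of_le_add_div {t C p F : ℝ} (ht : 0 < t) (hp : 0 < p)
    (h : (1 / (4 * t ^ 4) - 1) * (t / 2) ≤ C / t ^ 2 + F / (t ^ 4 * p)) :
    p * (t / 8 - t ^ 5 / 2 - C * t ^ 2) ≤ F := by
  have := mul_le_mul_of_nonneg_right h (by positivity : 0 ≤ t ^ 4 * p)
  field_simp at this
  nlinarith

theorem sq_div_mul_le_mul_sub {s C p : ℝ} (hs0 : 0 < s) (hs1 : s ≤ 1) (hC : 1 ≤ C)
    (hp : 0 ≤ p) :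
    s ^ 2 / 1024 * (p / C) ≤
      p * (s / (32 * C) / 8 - (s / (32 * C)) ^ 5 / 2 - C * (s / (32 * C)) ^ 2) := by
  have hC0 : 0 < C := by linarith
  have hrhs : s / (32 * C) / 8 - (s / (32 * C)) ^ 5 / 2 - C * (s / (32 * C)) ^ 2
      = (s / 256 - s ^ 5 / (2 * 32 ^ 5 * C ^ 4) - s ^ 2 / 1024) / C := by
    field_simp; ring
  have hs5 : s ^ 5 / (2 * 32 ^ 5 * C ^ 4) ≤ s / 512 := by
    rw [div_le_div_iff₀ (by positivity) (by norm_num)]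
    have : s ^ 5 ≤ s := pow_le_of_le_one hs0.le hs1 (by norm_num)
    have : 1 ≤ C ^ 4 := one_le_pow₀ hC
    nlinarith
  have hkey : s ^ 2 / 1024 ≤ s / 256 - s ^ 5 / (2 * 32 ^ 5 * C ^ 4) - s ^ 2 / 1024 := by
    nlinarith
  rw [hrhs]
  calc s ^ 2 / 1024 * (p / C) = p / C * (s ^ 2 / 1024) := mul_comm _ _
    _ ≤ p / C * (s / 256 - s ^ 5 / (2 * 32 ^ 5 * C ^ 4) - s ^ 2 / 1024) := by gcongr
    _ = _ := by ring

/-- **Optimality of the order `p` in the Rosenthal inequality via random selectors,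
explicit form.** -/
theorem rosenthal_p_optimal_selectors
    {Ω : Type} [MeasurableSpace Ω] (μ : Measure Ω) [IsProbabilityMeasure μ]
    (C : ℝ) (hC : 1 ≤ C)
    (a : ℝ) (ha : a = (7 / 8 : ℝ) ^ 3 / (32 * C) ^ 4)
    (p : ℕ) (hp : 0 < p) (hpa : ((2 : ℝ) ^ p)⁻¹ < a)
    (k : ℝ) (hk : k = a * p)
    (δ : Fin p → Ω → ℝ)
    (hmeas : ∀ i, Measurable (δ i))
    (h01 : ∀ i ω, δ i ω = 0 ∨ δ i ω = 1)
    (hindep : iIndepFun δ μ)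
    (hbern : ∀ i, μ {ω | δ i ω = 1} = ENNReal.ofReal a)
    (F : ℝ)
    (hF : (∫ ω, |k⁻¹ * ∑ i, δ i ω - 1| ^ (p : ℝ) ∂μ) ^ (1 / (p : ℝ)) ≤
      C * Real.sqrt (p / k) + F / k) :
    ((7 / 8 : ℝ) ^ ((3 : ℝ) / 2) / 1024) * (p / C) ≤ F := by
  have hp' : (0 : ℝ) < p := by exact_mod_cast hp
  set s : ℝ := (7 / 8 : ℝ) ^ ((3 : ℝ) / 4)
  have hs0 : 0 < s := by positivity
  have hs1 : s ≤ 1 := rpow_le_one (by norm_num) (by norm_num) (by norm_num)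
  have hs4 : s ^ 4 = (7 / 8 : ℝ) ^ 3 := by
    rw [← rpow_natCast, ← rpow_mul (by norm_num)]; norm_num
  have hs2 : (7 / 8 : ℝ) ^ ((3 : ℝ) / 2) = s ^ 2 := by
    rw [← rpow_natCast, ← rpow_mul (by norm_num)]; norm_num
  set t : ℝ := s / (32 * C)
  have ht0 : 0 < t := by positivity
  have ht : t ≤ 1 / 32 := by
    rw [div_le_div_iff₀ (by positivity) (by norm_num)]; nlinarith
  have hat : a = t ^ 4 := by rw [ha, ← hs4, ← div_pow]
  have hta : a ^ (1 / 4 : ℝ) = t := by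
    rw [hat, one_div, show (4 : ℝ) = (4 : ℕ) by norm_num, pow_rpow_inv_natCast ht0.le (by norm_num)]
  have ha4 : a ≤ 1 / 4 := hat ▸ (pow_le_pow_left₀ ht0.le ht 4).trans (by norm_num)
  have hsqrt : sqrt (p / k) = 1 / t ^ 2 := by
    rw [hk, hat, show (p : ℝ) / (t ^ 4 * p) = (1 / t ^ 2) ^ 2 by field_simp,
      sqrt_sq (by positivity)]
  have hbound := (hk ▸ selectors_moment_lower_bound hp hmeas h01 hindep hbern ha4 hpa.le).trans hF
  rw [hsqrt, hta, hk, hat, mul_one_div] at hbound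
  rw [hs2]
  exact (sq_div_mul_le_mul_sub hs0 hs1 hC hp'.le).trans (mul_sub_le_of_le_add_div ht0 hp' hbound)
end

section
/- (Refined optimality of the order p in the Rosenthal inequality: logarithmic improvement in the Gaussian constant.) There exists an absolute constant c₁ > 0 such that the following holds. Let C ≥ 1.5 be a real number and let f : ℕ → ℝ be a function with the property that for every positive integer p and every real number k with 0 < k ≤ p, if δ_1, …, δ_p are independent {0,1}-valued random variables with P(δ_i = 1) = k/p, then ( E[ |(1/k)·Σ_{i=1}^p δ_i − 1|^p ] )^{1/p} ≤ C·√(p/k) + f(p)/k. Then for all sufficiently large p one has f(p) ≥ p / (c₁·log C). -/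
/-!
Test the hypothesis on i.i.d. Bernoulli variables with success probability `ρ = C⁻⁴⁰`, i.e.
`k = p C⁻⁴⁰`. On the event that a fixed set of `m = ⌈p / (40 log C)⌉` coordinates all equal `1`,
which has probability `ρ ^ m ≥ e ^ (-2p)`, the normalised sum is at least `m / k`, so the `p`-th
moment norm is at least `(m / k - 1) / 8`. After multiplying the hypothesis by `k`, the Gaussian
term contributes only `C √(p k) = p C⁻¹⁹`, which is negligible against `p / (40 log C)` once
`C ≥ 3/2`; hence `f p ≥ p / (500 log C)`.
-/

open MeasureTheory ProbabilityTheory Real Filter unitInterval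

theorem mul_measureReal_rpow_le_integral_rpow {Ω : Type*} [MeasurableSpace Ω] {μ : Measure Ω}
    [IsFiniteMeasure μ] {g : Ω → ℝ} {A : Set Ω} {c p : ℝ} (hc : 0 ≤ c) (hp : 0 < p)
    (hint : Integrable (fun ω => |g ω| ^ p) μ) (hA : ∀ ω ∈ A, c ≤ |g ω|) :
    c * μ.real A ^ (1 / p) ≤ (∫ ω, |g ω| ^ p ∂μ) ^ (1 / p) := by
  have markov : c ^ p * μ.real A ≤ ∫ ω, |g ω| ^ p ∂μ := calc
    c ^ p * μ.real A ≤ c ^ p * μ.real {ω | c ^ p ≤ |g ω| ^ p} := by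
      gcongr
      exacts [measure_ne_top μ _, fun ω hω => rpow_le_rpow hc (hA ω hω) hp.le]
    _ ≤ _ := mul_meas_ge_le_integral_of_nonneg (ae_of_all _ fun ω => by positivity) hint _
  calc c * μ.real A ^ (1 / p) = (c ^ p * μ.real A) ^ (1 / p) := by
        rw [mul_rpow (by positivity) measureReal_nonneg, ← rpow_mul hc, mul_one_div_cancel hp.ne',
          rpow_one]
    _ ≤ _ := by gcongr

section BernoulliProduct

variable {ι : Type*} [Fintype ι] (q : I)

noncomputable def bernoulliProduct : Measure (ι → Bool) :=
  Measure.pi fun _ => Ber(true, false, q)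

instance : IsProbabilityMeasure (bernoulliProduct (ι := ι) q) := by
  unfold bernoulliProduct; infer_instance

theorem iIndepFun_bernoulliProduct {β : Type*} [MeasurableSpace β] (X : Bool → β) :
    iIndepFun (fun i (ω : ι → Bool) => X (ω i)) (bernoulliProduct q) :=
  iIndepFun_pi fun _ => Measurable.of_discrete.aemeasurable

theorem bernoulliProduct_eval_eq_true (i : ι) :
    bernoulliProduct q {ω | ω i = true} = ENNReal.ofReal q := calc
  _ = Ber(true, false, q) {true} :=
    (measurePreserving_eval (fun _ : ι => Ber(true, false, q)) i).measure_preimage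
      (measurableSet_singleton _).nullMeasurableSet
  _ = ENNReal.ofReal q := by
    rw [bernoulliMeasure_apply_of_mem_of_notMem q (measurableSet_singleton _) rfl (by simp),
      ← ENNReal.ofReal_coe_nnreal, unitInterval.coe_toNNReal]

theorem bernoulliProduct_real_forall_mem_eq_true (S : Finset ι) :
    (bernoulliProduct q).real {ω | ∀ i ∈ S, ω i = true} = q ^ S.card := by
  have hset : {ω : ι → Bool | ∀ i ∈ S, ω i = true} = ⋂ i ∈ S, (fun ω => id (ω i)) ⁻¹' {true} := by
    ext ω; simp
  rw [measureReal_def, hset, (iIndepFun_bernoulliProduct q id).measure_inter_preimage_eq_mul S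
    fun _ _ => measurableSet_singleton _]
  simp only [id, Set.preimage, Set.mem_singleton_iff, bernoulliProduct_eval_eq_true,
    Finset.prod_const, ENNReal.toReal_pow, ENNReal.toReal_ofReal q.2.1]

theorem le_moment_bernoulliProduct_sum {m : ℕ} (hm : m ≤ Fintype.card ι) {k p : ℝ}
    (hk : 0 < k) (hkm : k ≤ m) (hp : 0 < p) :
    (m / k - 1) * ((q : ℝ) ^ m) ^ (1 / p) ≤
      (∫ ω, |k⁻¹ * ∑ i : ι, (if ω i then (1 : ℝ) else 0) - 1| ^ p ∂bernoulliProduct q) ^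
        (1 / p) := by
  obtain ⟨S, -, rfl⟩ :=
    Finset.exists_subset_card_eq (s := (Finset.univ : Finset ι)) (by simpa using hm)
  rw [← bernoulliProduct_real_forall_mem_eq_true]
  refine mul_measureReal_rpow_le_integral_rpow (sub_nonneg.2 ((one_le_div hk).2 hkm)) hp
    Integrable.of_finite fun ω hω => ?_
  have hsum : (S.card : ℝ) ≤ ∑ i, (if ω i then (1 : ℝ) else 0) := calc
    (S.card : ℝ) = ∑ i ∈ S, (if ω i then (1 : ℝ) else 0) := by simp_all
    _ ≤ _ := Finset.sum_le_sum_of_subset_of_nonneg (Finset.subset_univ S)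
      fun i _ _ => by positivity
  calc (S.card / k - 1 : ℝ) ≤ k⁻¹ * ∑ i, (if ω i then (1 : ℝ) else 0) - 1 := by
        rw [div_eq_inv_mul]; gcongr
    _ ≤ _ := le_abs_self _

end BernoulliProduct

theorem natCast_mul_log_le_pow {x : ℝ} (hx : 0 < x) (n : ℕ) : n * log x ≤ x ^ n := by
  rw [← log_pow]; linarith [log_le_sub_one_of_pos (pow_pos hx n)]

theorem one_third_le_log {C : ℝ} (hC : 3 / 2 ≤ C) : 1 / 3 ≤ log C := by
  have : C⁻¹ ≤ 2 / 3 := by rw [inv_le_comm₀ (by linarith) (by norm_num)]; linarith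
  linarith [one_sub_inv_le_log_of_pos (show 0 < C by linarith)]

theorem inv_eight_le_exp_neg_two : (1 / 8 : ℝ) ≤ exp (-2) := by
  rw [exp_neg, one_div, inv_le_inv₀ (by norm_num) (exp_pos _), show (2 : ℝ) = 1 + 1 by norm_num,
    exp_add]
  nlinarith [exp_one_lt_d9, exp_pos 1]

theorem exp_neg_two_le_pow_rpow_one_div {ρ p : ℝ} {m : ℕ} (hρ : 0 < ρ) (hp : 0 < p)
    (h : -log ρ * m ≤ 2 * p) : exp (-2) ≤ (ρ ^ m) ^ (1 / p) := by
  rw [rpow_def_of_pos (pow_pos hρ m), log_pow, exp_le_exp, mul_one_div, le_div_iff₀ hp]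
  linarith

theorem mul_natCeil_div_le {a p : ℝ} (ha : 0 < a) (hap : a ≤ p) : a * ⌈p / a⌉₊ ≤ 2 * p := by
  have := Nat.ceil_lt_add_one (div_nonneg (ha.le.trans hap) ha.le)
  calc a * ⌈p / a⌉₊ ≤ a * (p / a + 1) := by gcongr
    _ = p + a := by field_simp
    _ ≤ 2 * p := by linarith

theorem div_log_le_of_moment_bound {C p k m t F : ℝ} (hC : 3 / 2 ≤ C) (hp : 0 < p)
    (hk : k = p / C ^ 40) (hm : p / (40 * log C) ≤ m) (hkm : k ≤ m) (ht : 1 / 8 ≤ t)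
    (h : (m / k - 1) * t ≤ C * √(p / k) + F / k) : p / (500 * log C) ≤ F := by
  have hC0 : 0 < C := by linarith
  have hL : 0 < log C := log_pos (by linarith)
  have hk0 : 0 < k := by rw [hk]; positivity
  have h8 : (m / k - 1) / 8 ≤ C * √(p / k) + F / k := by
    refine le_trans ?_ h
    rw [div_eq_mul_one_div]
    gcongr
    exact sub_nonneg.2 ((one_le_div hk0).2 hkm)
  have hsqrt : √(p / k) = C ^ 20 := by
    rw [hk, div_div_cancel₀ hp.ne', show C ^ 40 = (C ^ 20) ^ 2 by ring, sqrt_sq (by positivity)]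
  have hmk : (m - k) / 8 ≤ p / C ^ 19 + F := calc
    (m - k) / 8 = (m / k - 1) / 8 * k := by field_simp
    _ ≤ (C * C ^ 20 + F / k) * k := by rw [← hsqrt]; gcongr
    _ = p / C ^ 19 + F := by rw [hk]; field_simp
  have h19 : p / C ^ 19 ≤ p / (1000 * log C) := by
    have : (1000 : ℝ) ≤ C ^ 18 := le_trans (by norm_num) (pow_le_pow_left₀ (by norm_num) hC 18)
    calc p / C ^ 19 ≤ p / (1000 * C) := by
          gcongr; rw [pow_succ]; nlinarith
      _ ≤ p / (1000 * log C) := by gcongr; exact log_le_self hC0.le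
  have h40 : k ≤ p / C ^ 19 := by
    rw [hk]; gcongr
    · linarith
    · norm_num
  have hrescale : p / (40 * log C) = 25 / 2 * (p / (500 * log C)) ∧
      p / (1000 * log C) = 1 / 2 * (p / (500 * log C)) := by
    constructor <;> field_simp <;> ring
  linarith [hrescale.1, hrescale.2]

/-- **Refined optimality of the order `p` in the Rosenthal inequality: logarithmic improvement
in the Gaussian constant.** -/
theorem rosenthal_p_optimal_log_refinement :
    ∃ c₁ : ℝ, 0 < c₁ ∧
      ∀ C : ℝ, 1.5 ≤ C →
      ∀ f : ℕ → ℝ,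
      (∀ p : ℕ, 0 < p → ∀ k : ℝ, 0 < k → k ≤ p →
        ∀ (Ω : Type) [MeasurableSpace Ω] (μ : Measure Ω), IsProbabilityMeasure μ →
        ∀ δ : Fin p → Ω → ℝ,
        (∀ i, Measurable (δ i)) →
        (∀ i ω, δ i ω = 0 ∨ δ i ω = 1) →
        iIndepFun δ μ →
        (∀ i, μ {ω | δ i ω = 1} = ENNReal.ofReal (k / p)) →
        (∫ ω, |k⁻¹ * ∑ i, δ i ω - 1| ^ (p : ℝ) ∂μ) ^ (1 / (p : ℝ)) ≤
          C * Real.sqrt (p / k) + f p / k) →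
      ∀ᶠ p : ℕ in atTop, (p : ℝ) / (c₁ * Real.log C) ≤ f p := by
  refine ⟨500, by norm_num, fun C hC f hf => ?_⟩
  have hC0 : 0 < C := by linarith
  have hL := one_third_le_log (by linarith : 3 / 2 ≤ C)
  filter_upwards [tendsto_natCast_atTop_atTop.eventually_ge_atTop (40 * C)] with p hp
  have hLp : 40 * log C ≤ p := by linarith [log_le_self hC0.le]
  have hp0 : (0 : ℝ) < p := by linarith
  have hpow : 1 ≤ C ^ 40 := one_le_pow₀ (by linarith)
  let ρ : I := ⟨(C ^ 40)⁻¹, by positivity, inv_le_one_of_one_le₀ hpow⟩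
  set k : ℝ := p / C ^ 40 with hk
  have hkρ : k / p = ρ := by simp [ρ, hk, div_div_cancel_left' hp0.ne']
  set m := ⌈p / (40 * log C)⌉₊
  have hm : p / (40 * log C) ≤ m := Nat.le_ceil _
  have hmp : m ≤ p := Nat.ceil_le.2 (div_le_self hp0.le (by linarith))
  have hkm : k ≤ m := le_trans (div_le_div_of_nonneg_left hp0.le (by linarith)
    (by exact_mod_cast natCast_mul_log_le_pow hC0 40)) hm
  have hmoment := hf p (by exact_mod_cast hp0) k (by positivity) (div_le_self hp0.le hpow)
    (Fin p → Bool) (bernoulliProduct ρ) inferInstance (fun i ω => if ω i then 1 else 0)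
    (fun _ => Measurable.of_discrete) (fun i ω => by cases ω i <;> simp)
    (iIndepFun_bernoulliProduct ρ fun b => if b then 1 else 0)
    (fun i => by simpa [hkρ] using bernoulliProduct_eval_eq_true ρ i)
  have hρm : 1 / 8 ≤ ((ρ : ℝ) ^ m) ^ (1 / (p : ℝ)) :=
    inv_eight_le_exp_neg_two.trans <| exp_neg_two_le_pow_rpow_one_div (by positivity) hp0 <| by
      simpa [ρ, log_inv, log_pow] using mul_natCeil_div_le (by linarith) hLp
  exact div_log_le_of_moment_bound (by linarith) hp0 hk hm hkm hρm <|
    (le_moment_bernoulliProduct_sum ρ (by simpa using hmp) (by positivity) hkm hp0).trans hmoment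
end
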